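/- The eigensequence of the Stirling transform satisfies, for every n ≥ 0: C_{n+2} = 1 + Σ_{k=0}^n C(n,k)·(Σ_{j=0}^k C_j·S^2_{k,j}), where S^2_{k,j} = Σ_{i=0}^k S(k,i)·S(i,j) are the entries of the square of the Stirling matrix of the second kind. -/

import Mathlib

/-- Stirling numbers of the second kind. -/
def S2 : ℕ → ℕ → ℕ
  | 0, 0 => 1
  | 0, _ + 1 => 0
  | _ + 1, 0 => 0
  | n + 1, m + 1 => (m + 1) * S2 n (m + 1) + S2 n m

/-- Entries `S^p_{n,m}` of the `p`-th power of the Stirling matrix (for `p ≥ 1`;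
the value at `p = 0` is junk). -/
def Sp : ℕ → ℕ → ℕ → ℕ
  | 0, _, _ => 0
  | 1, n, m => S2 n m
  | p + 2, n, m => ∑ k ∈ Finset.range (n + 1), S2 n k * Sp (p + 1) k m

/-!
Let `T` be the Stirling transform `(T a)ₙ = ∑ₖ aₖ S(n,k)`. The eigensequence condition says that
the shifted sequence `(C_{m+1})ₘ` is `δ₀ + T C` (the `δ₀` because `(T C)₀ = C₀ = 0` but `C₁ = 1`).
The binomial recurrence
`S(n+1,k+1) = ∑ᵢ C(n,i) S(i,k)` gives `(T a)_{n+1} = ∑ᵢ C(n,i) (T a')ᵢ` for the shifted sequence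
`a'`, hence `C_{n+2} = ∑ᵢ C(n,i) (S(i,0) + (T (T C))ᵢ)`. Here `T ∘ T` is the transform by the squared
Stirling matrix, and `∑ᵢ C(n,i) S(i,0) = S(n+1,1) = 1`.
-/

open Finset Nat

theorem S2_eq_stirlingSecond : ∀ n m, S2 n m = stirlingSecond n m
  | 0, 0 | 0, _ + 1 | _ + 1, 0 => rfl
  | n + 1, m + 1 => by
    rw [S2, stirlingSecond_succ_succ, S2_eq_stirlingSecond n (m + 1), S2_eq_stirlingSecond n m]

theorem Sp_two_eq_sum (n m : ℕ) :
    Sp 2 n m = ∑ k ∈ range (n + 1), stirlingSecond n k * stirlingSecond k m := by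
  simp only [Sp, S2_eq_stirlingSecond]

/-- Choose the `i` elements outside the block of `n + 1` and split them into `k` blocks. -/
theorem stirlingSecond_succ_succ_eq_sum_choose (n k : ℕ) :
    stirlingSecond (n + 1) (k + 1) = ∑ i ∈ range (n + 1), n.choose i * stirlingSecond i k := by
  induction n generalizing k with
  | zero => simp [stirlingSecond_succ_succ]
  | succ n ih =>
    have pascal := sum_choose_succ_mul (R := ℕ) (fun i _ => stirlingSecond i k) n
    simp only [Nat.cast_id] at pascal
    rw [pascal, ← ih, stirlingSecond_succ_succ]
    suffices k * stirlingSecond (n + 1) (k + 1) + stirlingSecond (n + 1) k =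
        ∑ i ∈ range (n + 1), n.choose i * stirlingSecond (i + 1) k by linarith
    cases k with
    | zero => simp
    | succ k =>
      rw [ih, ih, mul_sum, ← sum_add_distrib]
      exact sum_congr rfl fun i _ => by rw [stirlingSecond_succ_succ]; ring

section StirlingTransform

variable {R : Type*} [CommSemiring R]

def stirlingTransform (a : ℕ → R) (n : ℕ) : R :=
  ∑ k ∈ range (n + 1), a k * stirlingSecond n k

theorem stirlingTransform_eq_sum_range (a : ℕ → R) {n N : ℕ} (h : n < N) :
    stirlingTransform a n = ∑ k ∈ range N, a k * stirlingSecond n k := by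
  refine sum_subset (range_subset_range.2 h) fun k _ hk => ?_
  rw [stirlingSecond_eq_zero_of_lt (by simpa using hk), Nat.cast_zero, mul_zero]

theorem stirlingTransform_add (a b : ℕ → R) :
    stirlingTransform (a + b) = stirlingTransform a + stirlingTransform b := by
  ext n
  simp only [stirlingTransform, Pi.add_apply, add_mul, sum_add_distrib]

theorem stirlingTransform_single_zero (n : ℕ) :
    stirlingTransform (Pi.single 0 1 : ℕ → R) n = stirlingSecond n 0 := by
  simp [stirlingTransform, Pi.single_apply]

theorem stirlingTransform_succ (a : ℕ → R) (n : ℕ) :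
    stirlingTransform a (n + 1) =
      ∑ i ∈ range (n + 1), n.choose i * stirlingTransform (fun m => a (m + 1)) i := by
  calc stirlingTransform a (n + 1)
      = ∑ m ∈ range (n + 1), a (m + 1) * stirlingSecond (n + 1) (m + 1) := by
        simp [stirlingTransform, sum_range_succ' _ (n + 1)]
    _ = ∑ i ∈ range (n + 1), n.choose i *
          ∑ m ∈ range (n + 1), a (m + 1) * stirlingSecond i m := by
        simp only [stirlingSecond_succ_succ_eq_sum_choose, Nat.cast_sum, Nat.cast_mul, mul_sum]
        rw [sum_comm]
        exact sum_congr rfl fun i _ => sum_congr rfl fun m _ => by ring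
    _ = _ := sum_congr rfl fun i hi => by
        rw [stirlingTransform_eq_sum_range _ (mem_range.1 hi)]

theorem stirlingTransform_stirlingTransform (a : ℕ → R) (n : ℕ) :
    stirlingTransform (stirlingTransform a) n =
      ∑ j ∈ range (n + 1), a j *
        ∑ k ∈ range (n + 1), stirlingSecond n k * stirlingSecond k j := by
  calc stirlingTransform (stirlingTransform a) n
      = ∑ k ∈ range (n + 1), (∑ j ∈ range (n + 1), a j * stirlingSecond k j) *
          stirlingSecond n k := sum_congr rfl fun k hk => by
        rw [stirlingTransform_eq_sum_range _ (mem_range.1 hk)]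
    _ = _ := by
        simp only [sum_mul, mul_sum, Nat.cast_sum, Nat.cast_mul]
        rw [sum_comm]
        exact sum_congr rfl fun j _ => sum_congr rfl fun k _ => by ring

end StirlingTransform

/-- If `c` is the eigensequence of the Stirling transform, then
`C_{n+2} = 1 + ∑_{k=0}^n C(n,k) · ∑_{j=0}^k C_j · S²_{k,j}`, where `S²` is the square of
the Stirling matrix of the second kind. -/
theorem eigensequence_via_stirling_square (c : ℕ → ℝ) (h0 : c 0 = 0) (h1 : c 1 = 1)
    (hrec : ∀ n, 1 ≤ n → c (n + 1) = ∑ k ∈ Finset.range (n + 1), c k * S2 n k) (n : ℕ) :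
    c (n + 2) =
      1 + ∑ k ∈ Finset.range (n + 1),
          (n.choose k : ℝ) * ∑ j ∈ Finset.range (k + 1), c j * (Sp 2 k j : ℝ) := by
  have hT : ∀ m, 1 ≤ m → c (m + 1) = stirlingTransform c m := fun m hm =>
    (hrec m hm).trans (by simp only [stirlingTransform, S2_eq_stirlingSecond])
  have hshift : (fun m => c (m + 1)) = Pi.single 0 1 + stirlingTransform c := by
    ext (_ | m)
    · simp [stirlingTransform, h0, h1]
    · simp [hT (m + 1) (by omega)]
  have hbinom : ∑ i ∈ range (n + 1), (n.choose i : ℝ) * stirlingSecond i 0 = 1 := by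
    exact_mod_cast (stirlingSecond_succ_succ_eq_sum_choose n 0).symm.trans
      (stirlingSecond_one_right n)
  rw [hT (n + 1) (by omega), stirlingTransform_succ, hshift, stirlingTransform_add]
  simp only [Pi.add_apply, stirlingTransform_single_zero, mul_add, sum_add_distrib, hbinom,
    stirlingTransform_stirlingTransform, Sp_two_eq_sum, Nat.cast_sum, Nat.cast_mul]
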